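/- arXiv:2201.07446 — 2 statements merged into one kernel-verified Lean document; each statement's English description precedes it below -/
import Mathlib

section
/- Let (i_n) ∈ {-1,0,1}^ℕ satisfy 01(-1)0^∞ ≼ (i_n) ≼ 01^∞ in lexicographic order. Then the function λ ↦ (1-λ)·∑_{n≥1} i_n·λ^{n-1} is strictly increasing on (0, 1/3]. -/
open scoped Pointwise

/-- `PiFun i λ = (1-λ) ∑_{n≥0} i_n λ^n`, the series Π from the paper (0-based indexing). -/
noncomputable def PiFun (i : ℕ → ℝ) (l : ℝ) : ℝ := (1 - l) * ∑' n : ℕ, i n * l ^ n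

/-- `i` is a sequence over the alphabet `{-1,0,1}`. -/
def IsCoding (i : ℕ → ℝ) : Prop := ∀ n, i n = -1 ∨ i n = 0 ∨ i n = 1

/-- Strict lexicographic order on sequences. -/
def LexLt (i j : ℕ → ℝ) : Prop := ∃ m, (∀ n, n < m → i n = j n) ∧ i m < j m

/-- Non-strict lexicographic order on sequences. -/
def LexLe (i j : ℕ → ℝ) : Prop := LexLt i j ∨ i = j

-- `rho i j = 3^{-k}` where `k` is the first (0-based) index at which the sequences differ
-- (this equals `3^{1-k}` for 1-based indexing as in the paper).
open Classical in
noncomputable def rho (i j : ℕ → ℝ) : ℝ :=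
  if i = j then 0 else (3 : ℝ) ^ (-((sInf {n : ℕ | i n ≠ j n} : ℕ) : ℤ))

/-- The middle-`(1-2λ)` Cantor set `C_λ`. -/
def Cset (l : ℝ) : Set ℝ :=
  {x | ∃ i : ℕ → ℝ, (∀ n, i n = 0 ∨ i n = 1) ∧ x = (1 - l) * ∑' n : ℕ, i n * l ^ n}

/-- `Λ(t) = {λ ∈ (0,1/3] : t ∈ C_λ - C_λ}`. -/
def Lam (t : ℝ) : Set ℝ := {l | l ∈ Set.Ioc (0 : ℝ) (1/3) ∧ t ∈ Cset l - Cset l}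

/-!
Write `Π(i, λ) = ∑ i_n φ_n(λ)` with `φ_n(λ) = (1 - λ) λ^n`. For `n ≥ 1` every `φ_n` is increasing
on `[0, 1/2]`, so raising the digits `i_n` with `n ≥ 1` adds an increasing function to `Π(i, ·)`.
Hence it suffices to find a sequence with the same first digit as `i` and below it in all others,
whose `Π` is an explicit strictly increasing function on `(0, 1/3]`. The lexicographic bounds force `i = 01i_2…`.
If `i_2 ≥ 0` we compare with `01i_2(-1)^∞`, for which `Π = λ(1-λ) - λ³ + i_2 λ²(1-λ)`.
If `i_2 = -1`, then either `i = 01(-1)0^∞`, with `Π = λ(1-λ)²`, or the first nonzero digit after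
`i_2` is `i_m = 1`, and we compare with `01(-1)0…01(-1)^∞`, for which
`Π = λ(1-λ)² + λ^m(1-2λ)`; both summands increase on `[0, 1/3]` since `m ≥ 3`.
-/

open Finset Set

lemma summable_mul_pow_of_abs_le {c : ℕ → ℝ} {C l : ℝ} (hc : ∀ n, |c n| ≤ C) (hl0 : 0 ≤ l)
    (hl1 : l < 1) : Summable fun n => c n * l ^ n :=
  Summable.of_norm_bounded ((summable_geometric_of_lt_one hl0 hl1).mul_left C) fun n => by
    rw [Real.norm_eq_abs, abs_mul, abs_pow, abs_of_nonneg hl0]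
    exact mul_le_mul_of_nonneg_right (hc n) (pow_nonneg hl0 n)

lemma piFun_sub {i j : ℕ → ℝ} {l : ℝ} (hi : Summable fun n => i n * l ^ n)
    (hj : Summable fun n => j n * l ^ n) : PiFun (i - j) l = PiFun i l - PiFun j l := by
  simp only [PiFun, Pi.sub_apply, sub_mul, hi.tsum_sub hj, mul_sub]

lemma piFun_eq_of_eventually_const {i : ℕ → ℝ} {N : ℕ} {c l : ℝ} (hi : ∀ n, N ≤ n → i n = c)
    (hl0 : 0 ≤ l) (hl1 : l < 1) :
    PiFun i l = (1 - l) * ∑ n ∈ range N, i n * l ^ n + c * l ^ N := by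
  have htail : (fun n => i (n + N) * l ^ (n + N)) = fun n => c * l ^ N * l ^ n := by
    funext n
    rw [hi _ (Nat.le_add_left N n), pow_add]
    ring
  have hsum : Summable fun n => i n * l ^ n := by
    rw [← summable_nat_add_iff N, htail]
    exact (summable_geometric_of_lt_one hl0 hl1).mul_left _
  rw [PiFun, ← hsum.sum_add_tsum_nat_add N, htail, tsum_mul_left,
    tsum_geometric_of_lt_one hl0 hl1, mul_add]
  field_simp [sub_ne_zero.2 hl1.ne']

lemma monotoneOn_one_sub_mul_pow_succ (n : ℕ) :
    MonotoneOn (fun l : ℝ => (1 - l) * l ^ (n + 1)) (Icc 0 (1 / 2)) := by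
  intro a ha b hb hab
  have hpow : a ^ n ≤ b ^ n := pow_le_pow_left₀ ha.1 hab n
  have hquad : a * (1 - a) ≤ b * (1 - b) := by nlinarith [hb.2]
  calc (1 - a) * a ^ (n + 1) = a ^ n * (a * (1 - a)) := by ring
    _ ≤ b ^ n * (b * (1 - b)) := mul_le_mul hpow hquad (by nlinarith [ha.1, ha.2]) 
        (pow_nonneg (ha.1.trans hab) n)
    _ = (1 - b) * b ^ (n + 1) := by ring

lemma monotoneOn_piFun_of_nonneg {c : ℕ → ℝ} {C : ℝ} (hc : ∀ n, 0 ≤ c n) (hC : ∀ n, |c n| ≤ C)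
    (h0 : c 0 = 0) : MonotoneOn (PiFun c) (Icc 0 (1 / 2)) := by
  have hPi : ∀ l ∈ Icc (0 : ℝ) (1 / 2), PiFun c l = ∑' n, (1 - l) * (c n * l ^ n) ∧
      Summable fun n => (1 - l) * (c n * l ^ n) := fun l hl =>
    ⟨tsum_mul_left.symm,
      (summable_mul_pow_of_abs_le hC hl.1 (by linarith [hl.2])).mul_left _⟩
  intro a ha b hb hab
  rw [(hPi a ha).1, (hPi b hb).1]
  refine (hPi a ha).2.tsum_le_tsum (fun n => ?_) (hPi b hb).2
  cases n with
  | zero => simp [h0]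
  | succ n =>
    have := mul_le_mul_of_nonneg_left (monotoneOn_one_sub_mul_pow_succ n ha hb hab) (hc (n + 1))
    linarith

lemma strictMonoOn_piFun_of_le {i j : ℕ → ℝ} {C : ℝ} {s : Set ℝ} (hi : ∀ n, |i n| ≤ C)
    (hj : ∀ n, |j n| ≤ C) (hji : ∀ n, j n ≤ i n) (h0 : j 0 = i 0)
    (hmono : StrictMonoOn (PiFun j) s) (hs : s ⊆ Icc 0 (1 / 2)) : StrictMonoOn (PiFun i) s := by
  have hdiff : MonotoneOn (PiFun (i - j)) s :=
    (monotoneOn_piFun_of_nonneg (C := C + C) (fun n => sub_nonneg.2 (hji n))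
      (fun n => (abs_sub _ _).trans (add_le_add (hi n) (hj n))) (sub_eq_zero.2 h0.symm)).mono hs
  refine (hdiff.add_strictMono hmono).congr fun l hl => ?_
  have hl0 : 0 ≤ l := (hs hl).1
  have hl1 : l < 1 := by linarith [(hs hl).2]
  simp only [piFun_sub (summable_mul_pow_of_abs_le hi hl0 hl1)
    (summable_mul_pow_of_abs_le hj hl0 hl1), sub_add_cancel]

/-- `(1 - λ) ∑_{n<N} i_n λ^n - λ^N` is `Π` of the sequence `i_0 … i_{N-1} (-1)^∞`, which lies
below `i`. -/
lemma strictMonoOn_piFun_of_truncation {i : ℕ → ℝ} {N : ℕ} {s : Set ℝ} (hi : ∀ n, |i n| ≤ 1)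
    (hN : 0 < N) (hs : s ⊆ Icc 0 (1 / 2))
    (hmono : StrictMonoOn (fun l => (1 - l) * ∑ n ∈ range N, i n * l ^ n - l ^ N) s) :
    StrictMonoOn (PiFun i) s := by
  set j : ℕ → ℝ := fun n => if n < N then i n else -1
  refine strictMonoOn_piFun_of_le hi (j := j) (fun n => ?_) (fun n => ?_) (by simp [j, hN])
    (hmono.congr fun l hl => ?_) hs
  · by_cases hn : n < N <;> simp [j, hn, hi n]
  · by_cases hn : n < N
    · simp [j, hn]
    · simpa [j, hn] using (abs_le.1 (hi n)).1
  · have hl1 : l < 1 := by linarith [(hs hl).2]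
    have hprefix : ∑ n ∈ range N, j n * l ^ n = ∑ n ∈ range N, i n * l ^ n :=
      sum_congr rfl fun n hn => by simp [j, mem_range.1 hn]
    rw [piFun_eq_of_eventually_const (c := -1) (fun n hn => if_neg (not_lt.2 hn)) (hs hl).1 hl1,
      hprefix]
    ring

lemma strictMonoOn_mul_one_sub_sq :
    StrictMonoOn (fun l : ℝ => l * (1 - l) ^ 2) (Icc 0 (1 / 3)) := by
  intro a ha b hb hab
  have hab9 : a * b < 1 / 9 := by nlinarith [ha.1, hb.2]
  have hsum9 : 1 / 9 < (1 - a - b) ^ 2 := by nlinarith [ha.2, hb.2]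
  nlinarith [mul_pos (sub_pos.2 hab) (show 0 < (1 - a - b) ^ 2 - a * b by linarith)]

lemma strictMonoOn_mul_one_sub_sub_cube :
    StrictMonoOn (fun l : ℝ => l * (1 - l) - l ^ 3) (Icc 0 (1 / 3)) := by
  intro a ha b hb hab
  nlinarith [mul_pos (sub_pos.2 hab)
    (show 0 < 1 - a - b - (a ^ 2 + a * b + b ^ 2) by nlinarith [ha.1, ha.2, hb.2])]

lemma monotoneOn_pow_mul_one_sub_two_mul {m : ℕ} (hm : 2 ≤ m) :
    MonotoneOn (fun l : ℝ => l ^ m * (1 - 2 * l)) (Icc 0 (1 / 3)) := by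
  obtain ⟨k, rfl⟩ := Nat.exists_eq_add_of_le' hm
  intro a ha b hb hab
  have hpow : a ^ k ≤ b ^ k := pow_le_pow_left₀ ha.1 hab k
  have hcube : a ^ 2 * (1 - 2 * a) ≤ b ^ 2 * (1 - 2 * b) := by
    nlinarith [mul_nonneg (mul_nonneg (sub_nonneg.2 hab) ha.1)
        (by linarith [ha.2] : (0 : ℝ) ≤ 1 - 3 * a),
      mul_nonneg (mul_nonneg (sub_nonneg.2 hab) (ha.1.trans hab))
        (by linarith [hb.2] : (0 : ℝ) ≤ 1 - 3 * b),
      mul_nonneg (sub_nonneg.2 hab) (sq_nonneg (a - b))]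
  calc a ^ (k + 2) * (1 - 2 * a) = a ^ k * (a ^ 2 * (1 - 2 * a)) := by ring
    _ ≤ b ^ k * (b ^ 2 * (1 - 2 * b)) :=
        mul_le_mul hpow hcube (by nlinarith [ha.1, ha.2]) (pow_nonneg (ha.1.trans hab) k)
    _ = b ^ (k + 2) * (1 - 2 * b) := by ring

lemma LexLe.le_of_eqOn_lt {i j : ℕ → ℝ} (h : LexLe i j) {k : ℕ} (hk : ∀ n < k, i n = j n) :
    i k ≤ j k := by
  rcases h with ⟨m, hm, hlt⟩ | rfl
  · rcases lt_trichotomy m k with hmk | rfl | hkm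
    · exact absurd (hk m hmk) hlt.ne
    · exact hlt.le
    · exact (hm k hkm).le
  · exact le_rfl

section Prefix

variable {i : ℕ → ℝ} (h0 : i 0 = 0) (h1 : i 1 = 1)
include h0 h1

lemma strictMonoOn_piFun_of_two_nonneg (hi : ∀ n, |i n| ≤ 1) (h2 : 0 ≤ i 2) :
    StrictMonoOn (PiFun i) (Icc 0 (1 / 3)) := by
  have hs : Icc (0 : ℝ) (1 / 3) ⊆ Icc 0 (1 / 2) := Icc_subset_Icc_right (by norm_num)
  have hsq : MonotoneOn (fun l : ℝ => i 2 * ((1 - l) * l ^ 2)) (Icc 0 (1 / 3)) :=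
    fun a ha b hb hab => mul_le_mul_of_nonneg_left
      (monotoneOn_one_sub_mul_pow_succ 1 (hs ha) (hs hb) hab) h2
  refine strictMonoOn_piFun_of_truncation (N := 3) hi (by norm_num) hs
    ((strictMonoOn_mul_one_sub_sub_cube.add_monotone hsq).congr fun l _ => ?_)
  simp [sum_range_succ, h0, h1]
  ring

variable (h2 : i 2 = -1)
include h2

lemma sum_range_mul_pow_of_prefix (l : ℝ) {m : ℕ} (hm : 3 ≤ m)
    (hz : ∀ n, 3 ≤ n → n < m → i n = 0) : ∑ n ∈ range m, i n * l ^ n = l - l ^ 2 := by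
  induction m, hm using Nat.le_induction with
  | base =>
    simp [sum_range_succ, h0, h1, h2]
    ring
  | succ k hk ih =>
    rw [sum_range_succ, ih fun n h3 hn => hz n h3 (by omega), hz k hk (by omega)]
    ring

lemma strictMonoOn_piFun_of_tail_eq_zero (hz : ∀ n, 3 ≤ n → i n = 0) :
    StrictMonoOn (PiFun i) (Icc 0 (1 / 3)) :=
  strictMonoOn_mul_one_sub_sq.congr fun l hl => by
    rw [piFun_eq_of_eventually_const hz hl.1 (by linarith [hl.2]),
      sum_range_mul_pow_of_prefix h0 h1 h2 l le_rfl fun n h3 hn => absurd hn (not_lt.2 h3)]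
    ring

lemma strictMonoOn_piFun_of_eq_one_after_zeros (hi : ∀ n, |i n| ≤ 1) {m : ℕ} (hm : 3 ≤ m)
    (hz : ∀ n, 3 ≤ n → n < m → i n = 0) (him : i m = 1) :
    StrictMonoOn (PiFun i) (Icc 0 (1 / 3)) := by
  refine strictMonoOn_piFun_of_truncation hi (by omega : 0 < m + 1)
    (Icc_subset_Icc_right (by norm_num))
    ((strictMonoOn_mul_one_sub_sq.add_monotone
      (monotoneOn_pow_mul_one_sub_two_mul (by omega : 2 ≤ m))).congr fun l _ => ?_)
  simp only [sum_range_succ, sum_range_mul_pow_of_prefix h0 h1 h2 l hm hz, him]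
  ring

end Prefix

theorem stmt7 (i : ℕ → ℝ) (hi : IsCoding i)
    (hlow : LexLe (fun n => if n = 0 then (0 : ℝ) else if n = 1 then 1 else if n = 2 then -1 else 0) i)
    (hhigh : LexLe i (fun n => if n = 0 then (0 : ℝ) else 1)) :
    StrictMonoOn (fun l => PiFun i l) (Set.Ioc (0 : ℝ) (1/3)) := by
  have hbd : ∀ n, |i n| ≤ 1 := fun n => by rcases hi n with h | h | h <;> norm_num [h]
  have h0 : i 0 = 0 := le_antisymm (by simpa using hhigh.le_of_eqOn_lt (k := 0) (by simp))
    (by simpa using hlow.le_of_eqOn_lt (k := 0) (by simp))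
  have h1 : i 1 = 1 := le_antisymm
    (by simpa using hhigh.le_of_eqOn_lt (k := 1) fun n hn => by simp [Nat.lt_one_iff.1 hn, h0])
    (by simpa using hlow.le_of_eqOn_lt (k := 1) fun n hn => by simp [Nat.lt_one_iff.1 hn, h0])
  refine StrictMonoOn.mono ?_ Ioc_subset_Icc_self
  rcases hi 2 with h2 | h2 | h2
  · have hlow_tail : ∀ n, 3 ≤ n →
        (if n = 0 then (0 : ℝ) else if n = 1 then 1 else if n = 2 then -1 else 0) = 0 :=
      fun n hn => by simp [show n ≠ 0 by omega, show n ≠ 1 by omega, show n ≠ 2 by omega]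
    rcases hlow with ⟨m, hpre, hm⟩ | hlow
    · have h3m : 3 ≤ m := by
        by_contra! hm3
        interval_cases m <;> simp_all
      have him : 0 < i m := by simpa only [hlow_tail m h3m] using hm
      exact strictMonoOn_piFun_of_eq_one_after_zeros h0 h1 h2 hbd h3m
        (fun n h3 hn => (hpre n hn).symm.trans (hlow_tail n h3))
        (by rcases hi m with h | h | h <;> first | exact h | linarith)
    · exact strictMonoOn_piFun_of_tail_eq_zero h0 h1 h2 fun n h3 => by
        rw [← hlow]
        exact hlow_tail n h3
  all_goals exact strictMonoOn_piFun_of_two_nonneg h0 h1 hbd (by norm_num [h2])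
end

section
/- Let (i_n) ∈ {-1,0,1}^ℕ satisfy 01^∞ ≺ (i_n) ≺ 1^∞ in lexicographic order (equivalently i_1 = 1 and (i_n) ≠ 1^∞). Then the function λ ↦ (1-λ)·∑_{n≥1} i_n·λ^{n-1} is strictly decreasing on (0, 1/3]. -/
/-!
Because `(1 - λ) ∑ λⁿ = 1`, we have `Π(i, λ) = 1 - ∑ (1 - iₙ)(1 - λ)λⁿ`. The coefficients
`1 - iₙ` are nonnegative, vanish at `n = 0` (as `i₀ = 1`) and are positive somewhere (as
`i ≠ 1^∞`), while every weight `(1 - λ)λⁿ` with `n ≥ 1` is strictly increasing on `[0, 1/2]`.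
-/

open scoped Pointwise

open Set

theorem strictMonoOn_one_sub_mul_pow_succ (n : ℕ) :
    StrictMonoOn (fun x : ℝ => (1 - x) * x ^ (n + 1)) (Icc 0 ((n + 1) / (n + 2))) := by
  apply strictMonoOn_of_deriv_pos (convex_Icc _ _) (by fun_prop)
  intro x hx
  rw [interior_Icc, mem_Ioo, lt_div_iff₀ (by positivity)] at hx
  have hd : HasDerivAt (fun x : ℝ => (1 - x) * x ^ (n + 1))
      (-x ^ (n + 1) + (1 - x) * ((n + 1) * x ^ n)) x := by
    simpa using ((hasDerivAt_id x).const_sub 1).fun_mul (hasDerivAt_pow (n + 1) x)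
  rw [hd.deriv, show -x ^ (n + 1) + (1 - x) * ((n + 1) * x ^ n)
      = x ^ n * ((n + 1) - (n + 2) * x) by ring]
  exact mul_pos (pow_pos hx.1 n) (by linarith)

theorem strictMonoOn_one_sub_mul_pow {n : ℕ} (hn : n ≠ 0) :
    StrictMonoOn (fun x : ℝ => (1 - x) * x ^ n) (Icc 0 (1 / 2)) := by
  obtain ⟨k, rfl⟩ := Nat.exists_eq_succ_of_ne_zero hn
  refine (strictMonoOn_one_sub_mul_pow_succ k).mono (Icc_subset_Icc_right ?_)
  rw [div_le_div_iff₀ (by norm_num) (by positivity)]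
  have : (0 : ℝ) ≤ k := k.cast_nonneg
  linarith

theorem summable_mul_pow_of_abs_le_one {i : ℕ → ℝ} (hi : ∀ n, |i n| ≤ 1) {l : ℝ}
    (hl : |l| < 1) : Summable fun n => i n * l ^ n := by
  refine (summable_geometric_of_lt_one (abs_nonneg l) hl).of_norm_bounded fun n => ?_
  rw [norm_mul, norm_pow, Real.norm_eq_abs, Real.norm_eq_abs]
  exact mul_le_of_le_one_left (by positivity) (hi n)

theorem PiFun_eq_one_sub_tsum {i : ℕ → ℝ} {l : ℝ} (hl₀ : 0 ≤ l) (hl₁ : l < 1)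
    (hi : Summable fun n => i n * l ^ n) :
    PiFun i l = 1 - ∑' n, (1 - i n) * ((1 - l) * l ^ n) := by
  have hgeom := summable_geometric_of_lt_one hl₀ hl₁
  have hsplit : ∑' n, (1 - i n) * ((1 - l) * l ^ n)
      = (1 - l) * (∑' n : ℕ, l ^ n - ∑' n, i n * l ^ n) := by
    rw [← hgeom.tsum_sub hi, ← tsum_mul_left]
    exact tsum_congr fun n => by ring
  rw [hsplit, tsum_geometric_of_lt_one hl₀ hl₁, PiFun, mul_sub,
    mul_inv_cancel₀ (by linarith)]
  ring

theorem summable_one_sub_mul_weight {i : ℕ → ℝ} {l : ℝ} (hl₀ : 0 ≤ l) (hl₁ : l < 1)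
    (hi : Summable fun n => i n * l ^ n) :
    Summable fun n => (1 - i n) * ((1 - l) * l ^ n) := by
  have h := ((summable_geometric_of_lt_one hl₀ hl₁).sub hi).mul_left (1 - l)
  exact h.congr fun n => by ring

theorem strictAntiOn_PiFun {i : ℕ → ℝ} (hi : ∀ n, |i n| ≤ 1) (hi₀ : i 0 = 1) {m : ℕ}
    (hm : i m < 1) : StrictAntiOn (PiFun i) (Icc 0 (1 / 2)) := by
  have hsum : ∀ l ∈ Icc (0 : ℝ) (1 / 2), Summable fun n => i n * l ^ n := fun l hl =>
    summable_mul_pow_of_abs_le_one hi (by rw [abs_of_nonneg hl.1]; linarith [hl.2])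
  have hsum' : ∀ l ∈ Icc (0 : ℝ) (1 / 2), Summable fun n => (1 - i n) * ((1 - l) * l ^ n) :=
    fun l hl => summable_one_sub_mul_weight hl.1 (by linarith [hl.2]) (hsum l hl)
  intro a ha b hb hab
  rw [PiFun_eq_one_sub_tsum ha.1 (by linarith [ha.2]) (hsum a ha),
    PiFun_eq_one_sub_tsum hb.1 (by linarith [hb.2]) (hsum b hb)]
  have hm₀ : m ≠ 0 := by rintro rfl; exact hm.ne hi₀
  have hcoef : ∀ n, 0 ≤ 1 - i n := fun n => by linarith [(abs_le.mp (hi n)).2]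
  refine sub_lt_sub_left ((hsum' a ha).tsum_lt_tsum (i := m) (fun n => ?_) ?_ (hsum' b hb)) 1
  · rcases eq_or_ne n 0 with rfl | hn
    · simp [hi₀]
    · exact mul_le_mul_of_nonneg_left
        ((strictMonoOn_one_sub_mul_pow hn).le_iff_le ha hb |>.mpr hab.le) (hcoef n)
  · exact mul_lt_mul_of_pos_left (strictMonoOn_one_sub_mul_pow hm₀ ha hb hab) (by linarith)

theorem IsCoding.abs_le_one {i : ℕ → ℝ} (hi : IsCoding i) (n : ℕ) : |i n| ≤ 1 := by
  rcases hi n with h | h | h <;> norm_num [h]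

theorem IsCoding.apply_zero_eq_one {i : ℕ → ℝ} (hi : IsCoding i)
    (h : LexLt (fun n => if n = 0 then (0 : ℝ) else 1) i) : i 0 = 1 := by
  obtain ⟨m, -, hm⟩ := h
  rcases eq_or_ne m 0 with rfl | hm₀
  · simp only [if_true] at hm
    rcases hi 0 with h | h | h <;> [linarith; linarith; exact h]
  · simp only [hm₀, if_false] at hm
    exact absurd (abs_le.mp (hi.abs_le_one m)).2 hm.not_ge

theorem stmt8 (i : ℕ → ℝ) (hi : IsCoding i)
    (hlow : LexLt (fun n => if n = 0 then (0 : ℝ) else 1) i)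
    (hhigh : LexLt i (fun _ => (1 : ℝ))) :
    StrictAntiOn (fun l => PiFun i l) (Set.Ioc (0 : ℝ) (1/3)) := by
  obtain ⟨m, -, hm⟩ := hhigh
  refine (strictAntiOn_PiFun hi.abs_le_one (hi.apply_zero_eq_one hlow) hm).mono ?_
  exact Ioc_subset_Icc_self.trans (Icc_subset_Icc_right (by norm_num))
end
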